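/- Every Gold-style learner that behaviorally correctly learns a language L has a Bc-locking sequence for L: there exists a finite sequence σ with content contained in L such that for every finite sequence τ over L ∪ {#}, the language denoted by h(σ ⌢ τ) equals L. -/
import Mathlib


/-- The content of a text `T : ℕ → Option ℕ` (with `none` as the pause symbol `#`). -/
def content (T : ℕ → Option ℕ) : Set ℕ := {x | ∃ n, T n = some x}

/-- The length-`n` initial segment `T[n]` of a text, as a finite sequence. -/
def seg (T : ℕ → Option ℕ) (n : ℕ) : List (Option ℕ) := (List.range n).map T

/-- The content of a finite sequence over `ℕ ∪ {#}`. -/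
def lcontent (σ : List (Option ℕ)) : Set ℕ := {x | (some x) ∈ σ}

lemma lcontent_append (a b : List (Option ℕ)) :
    lcontent (a ++ b) = lcontent a ∪ lcontent b := by
  ext x; simp [lcontent]

lemma seg_eq_of_agree (T : ℕ → Option ℕ) (l : List (Option ℕ))
    (hag : ∀ n, n < l.length → T n = l.getD n none) :
    seg T l.length = l := by
  apply List.ext_getElem
  · simp [seg]
  · intro n hn hn'
    simp only [seg, List.getElem_map, List.getElem_range]
    rw [hag n hn', List.getD_eq_getElem]

/-- Bc-locking sequence lemma: any Gold-style learner that Bc-learns `L` on every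
text for `L` has a Bc-locking sequence for `L`. -/
theorem bc_locking_sequence (H : ℕ → Set ℕ) (h : List (Option ℕ) → ℕ) (L : Set ℕ)
    (hLearn : ∀ T : ℕ → Option ℕ, content T = L →
      ∃ n₀, ∀ n ≥ n₀, H (h (seg T n)) = L) :
    ∃ σ : List (Option ℕ), lcontent σ ⊆ L ∧
      ∀ τ : List (Option ℕ), lcontent τ ⊆ L → H (h (σ ++ τ)) = L := by
  by_contra hcon
  push_neg at hcon
  -- bad extension function
  have hbad : ∀ σ : List (Option ℕ), lcontent σ ⊆ L →
      ∃ τ, lcontent τ ⊆ L ∧ H (h (σ ++ τ)) ≠ L := by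
    intro σ hσ
    obtain ⟨τ, hτ1, hτ2⟩ := hcon σ hσ
    exact ⟨τ, hτ1, hτ2⟩
  classical
  let bad : List (Option ℕ) → List (Option ℕ) := fun σ =>
    if hσ : lcontent σ ⊆ L then (hbad σ hσ).choose else []
  have bad_sub : ∀ σ (hσ : lcontent σ ⊆ L), lcontent (bad σ) ⊆ L := by
    intro σ hσ; simp only [bad, dif_pos hσ]; exact (hbad σ hσ).choose_spec.1
  have bad_ne : ∀ σ (hσ : lcontent σ ⊆ L), H (h (σ ++ bad σ)) ≠ L := by
    intro σ hσ; simp only [bad, dif_pos hσ]; exact (hbad σ hσ).choose_spec.2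
  -- canonical enumeration of L
  let e : ℕ → Option ℕ := fun n => if n ∈ L then some n else none
  -- the stage lists
  let σs : ℕ → List (Option ℕ) := fun k =>
    Nat.rec [] (fun k ih => ih ++ bad ih ++ [e k]) k
  have σs_succ : ∀ k, σs (k + 1) = σs k ++ bad (σs k) ++ [e k] := fun k => rfl
  have σs_sub : ∀ k, lcontent (σs k) ⊆ L := by
    intro k
    induction k with
    | zero => intro x hx; simp [σs, lcontent] at hx
    | succ k ih =>
      rw [σs_succ, lcontent_append, lcontent_append]
      intro x hx
      rcases hx with (hx | hx) | hx
      · exact ih hx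
      · exact bad_sub _ ih hx
      · simp only [lcontent, List.mem_singleton, Set.mem_setOf_eq] at hx
        simp only [e] at hx
        split at hx
        · rename_i hm; cases hx; exact hm
        · cases hx
  have σs_len : ∀ k, k ≤ (σs k).length := by
    intro k
    induction k with
    | zero => simp
    | succ k ih =>
      rw [σs_succ]
      simp only [List.length_append, List.length_singleton]
      omega
  have σs_prefix : ∀ k m, k ≤ m → σs k <+: σs m := by
    intro k m hkm
    induction m with
    | zero => interval_cases k; exact List.prefix_refl _
    | succ m ih =>
      rcases Nat.lt_or_ge k (m+1) with hk | hk
      · refine (ih (by omega)).trans ?_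
        rw [σs_succ]
        exact ⟨bad (σs m) ++ [e m], by simp⟩
      · have : k = m + 1 := by omega
        subst this; exact List.prefix_refl _
  -- the text
  let T : ℕ → Option ℕ := fun n => (σs (n+1)).getD n none
  have hTval : ∀ k n, n < (σs k).length → T n = (σs k).getD n none := by
    intro k n hn
    have hlen : n < (σs (n+1)).length := lt_of_lt_of_le (Nat.lt_succ_self n) (σs_len (n+1))
    rcases Nat.le_total k (n+1) with hk | hk
    · obtain ⟨t, ht⟩ := σs_prefix k (n+1) hk
      simp only [T, ← ht, List.getD_append _ _ _ _ hn]
    · obtain ⟨t, ht⟩ := σs_prefix (n+1) k hk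
      simp only [T, ← ht, List.getD_append _ _ _ _ hlen]
  have hseg : ∀ k, seg T (σs k).length = σs k := fun k =>
    seg_eq_of_agree T (σs k) (fun n hn => hTval k n hn)
  -- content T = L
  have hcontent : content T = L := by
    ext x
    constructor
    · rintro ⟨n, hn⟩
      have hlen : n < (σs (n+1)).length := lt_of_lt_of_le (Nat.lt_succ_self n) (σs_len (n+1))
      have : some x ∈ σs (n+1) := by
        rw [show T n = (σs (n+1)).getD n none from rfl, List.getD_eq_getElem _ _ hlen] at hn
        rw [← hn]; exact List.getElem_mem _
      exact σs_sub (n+1) this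
    · intro hx
      -- e x = some x appears in σs (x+1)
      have hmem : some x ∈ σs (x+1) := by
        rw [σs_succ]
        simp only [List.mem_append, List.mem_singleton]
        right; simp [e, hx]
      obtain ⟨n, hn, hval⟩ := List.getElem_of_mem hmem
      refine ⟨n, ?_⟩
      have := hTval (x+1) n hn
      rw [this, List.getD_eq_getElem _ _ hn, hval]
  -- contradiction
  obtain ⟨n₀, hn₀⟩ := hLearn T hcontent
  -- consider stage k = n₀; the list σs n₀ ++ bad (σs n₀) is a prefix of σs (n₀+1)
  set l := σs n₀ ++ bad (σs n₀) with hl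
  have hlpre : l <+: σs (n₀ + 1) := by rw [σs_succ]; exact ⟨[e n₀], by rw [hl, List.append_assoc]⟩
  have hllen : l.length ≤ (σs (n₀+1)).length := hlpre.length_le
  have hsegl : seg T l.length = l := by
    apply seg_eq_of_agree
    intro n hn
    obtain ⟨t, ht⟩ := hlpre
    rw [hTval (n₀+1) n (lt_of_lt_of_le hn hllen), ← ht, List.getD_append _ _ _ _ hn]
  have hge : l.length ≥ n₀ := by
    have := σs_len n₀
    simp only [hl, List.length_append]
    omega
  have := hn₀ l.length hge
  rw [hsegl] at this
  exact bad_ne (σs n₀) (σs_sub n₀) this
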